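/- arXiv:1703.10477 — 3 statements merged into one kernel-verified Lean document; each statement's English description precedes it below -/
import Mathlib

section
/- Let p be a prime and F ∈ Zp[[X]] with Weierstrass factorization F = u · p^μ · ∏_{i=1}^r F_i, where u is a unit, μ ≥ 0, and each F_i is a distinguished polynomial of degree d_i. If n ≥ 1 satisfies p^{n−1}(p−1) > d_i for all i, then ord_{ε_n} F(ε_n) = μ · p^{n−1}(p−1) + Σ_i d_i, where ε_n = ζ_{p^n} − 1 and ord_{ε_n} is normalized by ord_{ε_n}(ε_n) = 1. -/
/-!
Write `e = p^{n-1}(p-1)` and `Λ = ℤ_p⟦X⟧`. Since `(1+X)^{p^{n-1}} ≡ 1 + X^{p^{n-1}}` mod `p`, the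
geometric sum `Φ_n` is `≡ X^e` mod `p`, and its constant term is `p`; hence `Φ_n = X^e + p·G` with
`G` a unit, and in `Λ/(Φ_n)` the element `p` is `X^e` times a unit. A distinguished polynomial
`X^d + p·H` with `d < e` then becomes `X^d·(1 + X^{e-d}·(unit)·H)`, again `X^d` times a unit, so
`F` is `X^N` times a unit with `N = μe + ∑ dᵢ`. Finally, `X` is a non-zero-divisor (as `X ∤ Φ_n`)
and a non-unit (as `Φ_n(0) = p` is not a unit) of `Λ/(Φ_n)`, which forces `X^N·(unit) ∉ (X)^{N+1}`.
-/

open PowerSeries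

/-- The `p^n`-th "cyclotomic" polynomial in `1+X`: `Φ_n = ∑_{j<p} (1+X)^{j·p^{n-1}}`. -/
noncomputable def PhiPS5 (p : ℕ) [Fact p.Prime] (n : ℕ) : PowerSeries ℤ_[p] :=
  ∑ j ∈ Finset.range p, (1 + PowerSeries.X) ^ (j * p ^ (n - 1))

theorem Ideal.pow_mul_mem_span_singleton_pow_and_notMem_succ {S : Type*} [CommRing S] {x w : S}
    (hx : IsLeftRegular x) (hxu : ¬IsUnit x) (hw : IsUnit w) (N : ℕ) :
    x ^ N * w ∈ Ideal.span {x} ^ N ∧ x ^ N * w ∉ Ideal.span {x} ^ (N + 1) := by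
  simp only [Ideal.span_singleton_pow, Ideal.mem_span_singleton]
  refine ⟨dvd_mul_right _ _, fun ⟨t, ht⟩ => hxu ?_⟩
  have hwt : w = x * t :=
    hx.pow N (show x ^ N * w = x ^ N * (x * t) by rw [ht, pow_succ, mul_assoc])
  exact isUnit_of_mul_isUnit_left (hwt ▸ hw)

namespace PowerSeries

variable {R : Type*} [CommRing R]

theorem exists_eq_C_mul_of_coeff_mem_span_singleton {a : R} {f : R⟦X⟧}
    (h : ∀ k, coeff k f ∈ Ideal.span {a}) : ∃ g, f = C a * g := by
  choose c hc using fun k => Ideal.mem_span_singleton.mp (h k)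
  exact ⟨mk c, ext fun k => by rw [coeff_C_mul, coeff_mk, hc k]⟩

theorem _root_.Polynomial.Monic.exists_coe_eq_X_pow_add_C_mul {a : R} {f : Polynomial R}
    (hf : f.Monic) (hcoeff : ∀ j < f.natDegree, f.coeff j ∈ Ideal.span {a}) :
    ∃ H : R⟦X⟧, (f : R⟦X⟧) = X ^ f.natDegree + C a * H := by
  obtain ⟨H, hH⟩ := exists_eq_C_mul_of_coeff_mem_span_singleton (a := a)
    (f := (f : R⟦X⟧) - X ^ f.natDegree) fun k => by
      rw [map_sub, Polynomial.coeff_coe, coeff_X_pow]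
      rcases lt_trichotomy k f.natDegree with hk | rfl | hk
      · simpa [hk.ne] using hcoeff k hk
      · simp [hf.coeff_natDegree]
      · simp [hk.ne', Polynomial.coeff_eq_zero_of_natDegree_lt hk]
  exact ⟨H, by rw [← hH, add_sub_cancel]⟩

theorem exists_isUnit_mk_eq_X_pow_mul {I : Ideal R⟦X⟧} {a : R} {e : ℕ}
    (ha : Ideal.Quotient.mk I X ^ e ∣ Ideal.Quotient.mk I (C a)) {f : Polynomial R}
    (hf : f.Monic) (hlt : f.natDegree < e)
    (hcoeff : ∀ j < f.natDegree, f.coeff j ∈ Ideal.span {a}) :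
    ∃ v, IsUnit v ∧ Ideal.Quotient.mk I (f : R⟦X⟧) = Ideal.Quotient.mk I X ^ f.natDegree * v := by
  set π := Ideal.Quotient.mk I
  obtain ⟨H, hH⟩ := hf.exists_coe_eq_X_pow_add_C_mul hcoeff
  obtain ⟨s, hs⟩ := ha
  obtain ⟨S, rfl⟩ := Ideal.Quotient.mk_surjective s
  have hU : IsUnit (1 + X ^ (e - f.natDegree) * S * H) := by
    rw [isUnit_iff_constantCoeff]
    simp [zero_pow (Nat.sub_ne_zero_of_lt hlt)]
  refine ⟨π _, hU.map π, ?_⟩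
  have he : π X ^ e = π X ^ f.natDegree * π X ^ (e - f.natDegree) := by
    rw [← pow_add, Nat.add_sub_cancel' hlt.le]
  rw [hH, map_add, map_mul, hs, he]
  simp only [map_add, map_mul, map_pow, map_one]
  ring

theorem isLeftRegular_mk_X [IsDomain R] {Φ : R⟦X⟧} (hΦ : constantCoeff Φ ≠ 0) :
    IsLeftRegular (Ideal.Quotient.mk (Ideal.span {Φ}) X) := by
  intro y z hyz
  obtain ⟨Y, rfl⟩ := Ideal.Quotient.mk_surjective y
  obtain ⟨Z, rfl⟩ := Ideal.Quotient.mk_surjective z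
  simp only [← map_mul, Ideal.Quotient.eq, Ideal.mem_span_singleton] at hyz ⊢
  obtain ⟨G, hG⟩ := hyz
  have hXG : X ∣ G :=
    (X_prime.dvd_or_dvd ⟨Y - Z, hG.symm.trans (mul_sub _ _ _).symm⟩).resolve_left
      (by rwa [X_dvd_iff])
  obtain ⟨G', rfl⟩ := hXG
  exact ⟨G', mul_left_cancel₀ X_ne_zero (by rw [mul_sub, hG]; ring)⟩

theorem not_isUnit_mk_X {Φ : R⟦X⟧} (hΦ : ¬IsUnit (constantCoeff Φ)) :
    ¬IsUnit (Ideal.Quotient.mk (Ideal.span {Φ}) X) := by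
  rintro hX
  obtain ⟨t, ht⟩ := isUnit_iff_exists_inv.mp hX
  obtain ⟨T, rfl⟩ := Ideal.Quotient.mk_surjective t
  rw [← map_mul, ← map_one (Ideal.Quotient.mk _), Ideal.Quotient.eq,
    Ideal.mem_span_singleton] at ht
  obtain ⟨G, hG⟩ := ht
  have h0 := congrArg constantCoeff hG
  simp only [map_sub, map_mul, constantCoeff_X, zero_mul, map_one, zero_sub] at h0
  exact hΦ (.of_mul_eq_one (-constantCoeff G) (by rw [mul_neg, ← h0, neg_neg]))

end PowerSeries

section PhiPS5

variable {p : ℕ} [hp : Fact p.Prime]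

theorem constantCoeff_PhiPS5 (n : ℕ) : constantCoeff (PhiPS5 p n) = p := by
  simp [PhiPS5, map_sum]

theorem map_toZMod_PhiPS5 (n : ℕ) :
    map PadicInt.toZMod (PhiPS5 p n) = X ^ (p ^ (n - 1) * (p - 1)) := by
  have : CharP (ZMod p)⟦X⟧ p := charP_of_injective_ringHom C_injective p
  have hfrob : (1 + X : (ZMod p)⟦X⟧) ^ p ^ (n - 1) = 1 + X ^ p ^ (n - 1) := by
    simpa using add_pow_char_pow (1 : (ZMod p)⟦X⟧) X p (n - 1)
  have hsum : map PadicInt.toZMod (PhiPS5 p n) =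
      ∑ j ∈ Finset.range p, (1 + X ^ p ^ (n - 1)) ^ j := by
    simp only [PhiPS5, map_sum, map_pow, map_add, map_one, map_X, pow_mul', hfrob]
  have hgeom := geom_sum_mul_add (X ^ p ^ (n - 1) : (ZMod p)⟦X⟧) p
  simp only [add_comm _ (1 : (ZMod p)⟦X⟧)] at hgeom
  rw [add_pow_char, one_pow, add_right_inj, ← pow_mul, ← hsum] at hgeom
  refine mul_right_cancel₀ (pow_ne_zero (p ^ (n - 1)) X_ne_zero) ?_
  rw [hgeom, ← pow_add, ← mul_add_one, Nat.sub_one_add_one hp.out.ne_zero]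

theorem exists_isUnit_PhiPS5_eq (n : ℕ) :
    ∃ G, IsUnit G ∧ PhiPS5 p n = X ^ (p ^ (n - 1) * (p - 1)) + C (p : ℤ_[p]) * G := by
  set e := p ^ (n - 1) * (p - 1)
  have he : e ≠ 0 :=
    Nat.mul_ne_zero (pow_ne_zero _ hp.out.ne_zero) (Nat.sub_ne_zero_of_lt hp.out.one_lt)
  obtain ⟨G, hG⟩ := exists_eq_C_mul_of_coeff_mem_span_singleton (a := (p : ℤ_[p]))
    (f := PhiPS5 p n - X ^ e) fun k => by
      rw [← PadicInt.maximalIdeal_eq_span_p, ← PadicInt.ker_toZMod, RingHom.mem_ker,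
        ← coeff_map, map_sub, map_toZMod_PhiPS5, map_pow, map_X, sub_self, map_zero]
  refine ⟨G, ?_, by rw [← hG, add_sub_cancel]⟩
  have h0 := congrArg constantCoeff hG
  rw [map_sub, constantCoeff_PhiPS5, map_pow, constantCoeff_X, zero_pow he, sub_zero, map_mul,
    constantCoeff_C] at h0
  have hG0 : constantCoeff G = 1 :=
    mul_left_cancel₀ (Nat.cast_ne_zero.mpr hp.out.ne_zero) (h0.symm.trans (mul_one _).symm)
  rw [isUnit_iff_constantCoeff, hG0]
  exact isUnit_one

theorem exists_isUnit_mk_C_p_eq (n : ℕ) :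
    ∃ v, IsUnit v ∧ Ideal.Quotient.mk (Ideal.span {PhiPS5 p n}) (C (p : ℤ_[p])) =
      Ideal.Quotient.mk (Ideal.span {PhiPS5 p n}) X ^ (p ^ (n - 1) * (p - 1)) * v := by
  set π := Ideal.Quotient.mk (Ideal.span {PhiPS5 p n})
  obtain ⟨G, hG, hΦ⟩ := exists_isUnit_PhiPS5_eq (p := p) n
  obtain ⟨g, hg⟩ := hG.map π
  have h0 : π X ^ (p ^ (n - 1) * (p - 1)) + π (C (p : ℤ_[p])) * g = 0 := by
    rw [hg, ← map_pow, ← map_mul, ← map_add, ← hΦ]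
    exact Ideal.Quotient.eq_zero_iff_mem.mpr (Ideal.mem_span_singleton_self _)
  refine ⟨-↑g⁻¹, g⁻¹.isUnit.neg, ?_⟩
  linear_combination (↑g⁻¹ : _) * h0 - π (C (p : ℤ_[p])) * g.mul_inv

end PhiPS5

theorem stmt5_general (p : ℕ) [hp : Fact p.Prime] (n : ℕ)
    (r μ : ℕ) (u : (PowerSeries ℤ_[p])ˣ) (Fi : Fin r → Polynomial ℤ_[p]) (d : Fin r → ℕ)
    (hmonic : ∀ i, (Fi i).Monic) (hdeg : ∀ i, (Fi i).natDegree = d i)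
    (hdist : ∀ i, ∀ j < d i, (Fi i).coeff j ∈ Ideal.span {(p : ℤ_[p])})
    (hsmall : ∀ i, d i < p ^ (n - 1) * (p - 1))
    (F : PowerSeries ℤ_[p])
    (hF : F = (u : PowerSeries ℤ_[p]) * (p : PowerSeries ℤ_[p]) ^ μ *
        ∏ i, ((Fi i : Polynomial ℤ_[p]) : PowerSeries ℤ_[p])) :
    (Ideal.Quotient.mk (Ideal.span {PhiPS5 p n}) F ∈
        (Ideal.span {Ideal.Quotient.mk (Ideal.span {PhiPS5 p n}) PowerSeries.X}) ^
          (μ * (p ^ (n - 1) * (p - 1)) + ∑ i, d i)) ∧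
    (Ideal.Quotient.mk (Ideal.span {PhiPS5 p n}) F ∉
        (Ideal.span {Ideal.Quotient.mk (Ideal.span {PhiPS5 p n}) PowerSeries.X}) ^
          (μ * (p ^ (n - 1) * (p - 1)) + ∑ i, d i + 1)) := by
  set π := Ideal.Quotient.mk (Ideal.span {PhiPS5 p n})
  obtain ⟨v, hv, hpv⟩ := exists_isUnit_mk_C_p_eq (p := p) n
  have hFi : ∀ i, ∃ w, IsUnit w ∧ π (Fi i) = π X ^ d i * w := fun i => by
    simpa only [hdeg i] using exists_isUnit_mk_eq_X_pow_mul ⟨v, hpv⟩ (hmonic i)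
      ((hdeg i).trans_lt (hsmall i)) (by simpa only [hdeg i] using hdist i)
  choose w hw hπFi using hFi
  have hπF : π F =
      π X ^ (μ * (p ^ (n - 1) * (p - 1)) + ∑ i, d i) * (π u * v ^ μ * ∏ i, w i) := by
    rw [hF, map_mul, map_mul, map_pow, ← map_natCast C, hpv, map_prod,
      Finset.prod_congr rfl fun i _ => hπFi i, Finset.prod_mul_distrib,
      Finset.prod_pow_eq_pow_sum, pow_add, pow_mul']
    ring
  have hΦ0 := constantCoeff_PhiPS5 (p := p) n
  rw [hπF]
  exact Ideal.pow_mul_mem_span_singleton_pow_and_notMem_succ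
    (isLeftRegular_mk_X (by rw [hΦ0]; exact Nat.cast_ne_zero.mpr hp.out.ne_zero))
    (not_isUnit_mk_X (by rw [hΦ0]; exact mem_nonunits_iff.mp PadicInt.p_nonunit))
    (((u.isUnit.map π).mul (hv.pow μ)).mul (IsUnit.prod_univ_iff.mpr hw)) _

/-- If `F = u · p^μ · ∏ F_i ∈ Zp[[X]]` with `u` a unit and the `F_i`
distinguished polynomials of degree `d_i`, and if `p^{n-1}(p-1) > d_i` for all `i`, then
`ord_{ε_n} F(ε_n) = μ·p^{n-1}(p-1) + ∑ d_i`; the valuation statement is expressed in the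
discrete valuation ring `Λ/(Φ_n) ≅ Zp[ζ_{p^n}]`, where the image of `X` is the
uniformizer `ε_n = ζ_{p^n} - 1` (so `ord_{ε_n}(ε_n) = 1`). -/
theorem stmt5 (p : ℕ) [hp : Fact p.Prime] (n : ℕ) (hn : 1 ≤ n)
    (r μ : ℕ) (u : (PowerSeries ℤ_[p])ˣ) (Fi : Fin r → Polynomial ℤ_[p]) (d : Fin r → ℕ)
    (hmonic : ∀ i, (Fi i).Monic) (hdeg : ∀ i, (Fi i).natDegree = d i)
    (hdist : ∀ i, ∀ j < d i, (Fi i).coeff j ∈ Ideal.span {(p : ℤ_[p])})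
    (hsmall : ∀ i, d i < p ^ (n - 1) * (p - 1))
    (F : PowerSeries ℤ_[p])
    (hF : F = (u : PowerSeries ℤ_[p]) * (p : PowerSeries ℤ_[p]) ^ μ *
        ∏ i, ((Fi i : Polynomial ℤ_[p]) : PowerSeries ℤ_[p])) :
    (Ideal.Quotient.mk (Ideal.span {PhiPS5 p n}) F ∈
        (Ideal.span {Ideal.Quotient.mk (Ideal.span {PhiPS5 p n}) PowerSeries.X}) ^
          (μ * (p ^ (n - 1) * (p - 1)) + ∑ i, d i)) ∧
    (Ideal.Quotient.mk (Ideal.span {PhiPS5 p n}) F ∉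
        (Ideal.span {Ideal.Quotient.mk (Ideal.span {PhiPS5 p n}) PowerSeries.X}) ^
          (μ * (p ^ (n - 1) * (p - 1)) + ∑ i, d i + 1)) :=
  stmt5_general p (hp := hp) n r μ u Fi d hmonic hdeg hdist hsmall F hF
end

section
/- Let G be a profinite group, H ◁ G a closed normal subgroup with G/H ≅ Zp, and M a finitely generated Λ(G)-module such that M/I_H M (the H-coinvariants) is a finitely generated Zp-module (equivalently, finite after the additional hypothesis below). If M_H := M/I_H M is finite, then M is a finitely generated Λ(H)-module (topological Nakayama's lemma for Λ(H)). -/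
/-!
Pick a finitely generated `N ≤ M` mapping onto the finite quotient `M / I_H M`, so that
`M = N + I_H M`. Iterating gives `M = N + I_H ^ m M` for all `m`, and since `I_H ^ m` lies in
`(T₁ⁿ, …, T_dⁿ)` for `m` large, `M = N + ∑ Tᵢⁿ M` for every `n`. Write `x = yₙ + ∑ Tᵢⁿ • wₙᵢ`
with `yₙ ∈ N` and let `w` be a limit point of `(wₙ)` in the compact space `Mᵈ`. Because
`Tᵢⁿ → 0` in `Λ(H)`, the `yₙ` accumulate at `x`, and `N` is closed, being a continuous image
of the compact space `Λ(H)ᵏ`; hence `x ∈ N`.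
-/

/-- The product (profinite) topology on `Λ(H) = Zp[[T₁,…,T_d]]`, identifying a
multivariable power series with its coefficient function. -/
noncomputable def mvPowerSeriesTop (p : ℕ) [Fact p.Prime] (d : ℕ) :
    TopologicalSpace (MvPowerSeries (Fin d) ℤ_[p]) :=
  inferInstanceAs (TopologicalSpace ((Fin d →₀ ℕ) → ℤ_[p]))

open Filter Set Topology MvPowerSeries

namespace Submodule

variable {R M : Type*} [CommRing R] [AddCommGroup M] [Module R M]

theorem sup_pow_smul_eq_top {N : Submodule R M} {I : Ideal R} (h : N ⊔ I • ⊤ = ⊤) (n : ℕ) :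
    N ⊔ I ^ n • ⊤ = ⊤ := by
  induction n with
  | zero => simp [Ideal.one_eq_top]
  | succ n ih =>
    have : I • (N ⊔ I ^ n • ⊤) ≤ N ⊔ I ^ (n + 1) • ⊤ := by
      rw [smul_sup, ← smul_assoc, smul_eq_mul, ← pow_succ']
      exact sup_le_sup_right smul_le_right _
    refine eq_top_iff.2 ?_
    calc ⊤ = N ⊔ I • (N ⊔ I ^ n • ⊤) := by rw [ih, h]
      _ ≤ N ⊔ I ^ (n + 1) • ⊤ := sup_le le_sup_left this

theorem sup_span_pow_smul_eq_top {ι : Type*} [Finite ι] {N : Submodule R M} {r : ι → R}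
    (h : N ⊔ Ideal.span (range r) • ⊤ = ⊤) (n : ℕ) :
    N ⊔ Ideal.span (range (r · ^ n)) • ⊤ = ⊤ := by
  have hrad : Ideal.span (range r) ≤ (Ideal.span (range (r · ^ n))).radical :=
    Ideal.span_le.2 <| range_subset_iff.2 fun i => ⟨n, Ideal.subset_span ⟨i, rfl⟩⟩
  obtain ⟨m, hm⟩ := Ideal.exists_pow_le_of_le_radical_of_fg hrad (fg_span (finite_range r))
  exact top_le_iff.1 <| (sup_pow_smul_eq_top h m).ge.trans (sup_le_sup_left (smul_mono_left hm) _)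

theorem exists_sum_smul_eq_of_mem_span_range_smul_top {ι : Type*} [Fintype ι] {r : ι → R}
    {x : M} (hx : x ∈ Ideal.span (range r) • (⊤ : Submodule R M)) :
    ∃ w : ι → M, ∑ i, r i • w i = x := by
  refine smul_induction_on hx (fun a ha m _ => ?_) fun _ _ ⟨w, hw⟩ ⟨w', hw'⟩ => ?_
  · obtain ⟨c, rfl⟩ := (mem_span_range_iff_exists_fun R).1 ha
    exact ⟨fun i => c i • m, by simp [Finset.sum_smul, smul_smul, mul_comm]⟩
  · exact ⟨w + w', by simp [smul_add, Finset.sum_add_distrib, hw, hw']⟩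

theorem exists_fg_sup_eq_top_of_finite_quotient (P : Submodule R M) [Finite (M ⧸ P)] :
    ∃ N : Submodule R M, N.FG ∧ P ⊔ N = ⊤ := by
  let σ := Function.surjInv P.mkQ_surjective
  refine ⟨span R (range σ), fg_span (finite_range σ), (P.map_mkQ_eq_top _).1 ?_⟩
  rw [map_span, ← range_comp, (Function.rightInverse_surjInv _).comp_eq_id, range_id, span_univ]

variable [TopologicalSpace R] [TopologicalSpace M] [ContinuousSMul R M]

theorem FG.isCompact [CompactSpace R] [ContinuousAdd M] {N : Submodule R M} (hN : N.FG) :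
    IsCompact (N : Set M) := by
  obtain ⟨n, s, rfl⟩ := fg_iff_exists_fin_generating_family.1 hN
  rw [← Fintype.range_linearCombination, LinearMap.coe_range]
  refine isCompact_range ?_
  simp_rw [funext (Fintype.linearCombination_apply R s)]
  fun_prop

theorem eq_top_of_isClosed_of_sup_span_smul_eq_top [CompactSpace M] [IsTopologicalAddGroup M]
    {ι : Type*} [Fintype ι] {r : ι → R} (hr : ∀ i, IsTopologicallyNilpotent (r i))
    {N : Submodule R M} (hN : IsClosed (N : Set M)) (h : N ⊔ Ideal.span (range r) • ⊤ = ⊤) :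
    N = ⊤ := by
  refine eq_top_iff.2 fun x _ => ?_
  have hx : ∀ n, ∃ w : ι → M, x - ∑ i, r i ^ n • w i ∈ N := fun n => by
    obtain ⟨y, hy, z, hz, rfl⟩ := mem_sup.1 (sup_span_pow_smul_eq_top h n ▸ mem_top : x ∈ _)
    obtain ⟨w, rfl⟩ := exists_sum_smul_eq_of_mem_span_range_smul_top hz
    exact ⟨w, by simpa using hy⟩
  choose w hw using hx
  let F := Ultrafilter.of (atTop : Filter ℕ)
  have hw₀ : Tendsto w F (𝓝 (F.map w).lim) := (F.map w).le_nhds_lim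
  have htail : Tendsto (fun n => ∑ i, r i ^ n • w n i) F (𝓝 0) := by
    simpa using tendsto_finsetSum Finset.univ fun i _ =>
      ((hr i).mono_left (Ultrafilter.of_le _)).smul ((continuous_apply i).tendsto _ |>.comp hw₀)
  exact hN.mem_of_tendsto (by simpa using tendsto_const_nhds.sub htail) (.of_forall hw)

end Submodule

/-- topological Nakayama's lemma: Let `H ≅ Zp^d`, so that
`Λ(H) = Zp[[H]] ≅ Zp[[T₁,…,T_d]]`, with augmentation ideal `I_H = (T₁,…,T_d)`.
If `M` is a compact Hausdorff topological `Λ(H)`-module such that the coinvariants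
`M/I_H M` are finite, then `M` is a finitely generated `Λ(H)`-module. -/
theorem stmt15 (p : ℕ) [hp : Fact p.Prime] (d : ℕ)
    (M : Type*) [AddCommGroup M] [Module (MvPowerSeries (Fin d) ℤ_[p]) M]
    [TopologicalSpace M] [CompactSpace M] [T2Space M] [IsTopologicalAddGroup M]
    (hcont : @ContinuousSMul (MvPowerSeries (Fin d) ℤ_[p]) M _ (mvPowerSeriesTop p d) _)
    (hfin : Finite (M ⧸
      ((Ideal.span (Set.range (MvPowerSeries.X : Fin d → MvPowerSeries (Fin d) ℤ_[p]))) • ⊤ :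
        Submodule (MvPowerSeries (Fin d) ℤ_[p]) M))) :
    Module.Finite (MvPowerSeries (Fin d) ℤ_[p]) M := by
  let := mvPowerSeriesTop p d
  have : CompactSpace (MvPowerSeries (Fin d) ℤ_[p]) :=
    inferInstanceAs (CompactSpace ((Fin d →₀ ℕ) → ℤ_[p]))
  obtain ⟨N, hNfg, hN⟩ := Submodule.exists_fg_sup_eq_top_of_finite_quotient
    (Ideal.span (range (X : Fin d → MvPowerSeries (Fin d) ℤ_[p])) • ⊤ :
      Submodule (MvPowerSeries (Fin d) ℤ_[p]) M)
  have hX (i : Fin d) : IsTopologicallyNilpotent (X i : MvPowerSeries (Fin d) ℤ_[p]) :=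
    WithPiTopology.isTopologicallyNilpotent_of_constantCoeff_zero (constantCoeff_X i)
  have hNtop : N = ⊤ := Submodule.eq_top_of_isClosed_of_sup_span_smul_eq_top hX
    hNfg.isCompact.isClosed (sup_comm N _ ▸ hN)
  exact ⟨hNtop ▸ hNfg⟩
end

section
/- Let 0 → A → M → N → 0 be an exact sequence of finitely generated modules over Λ(H) = Zp[[H]] with H ≅ Zp^{d−1}, where A is Zp-torsion (i.e., killed by a power of p after localization; each element Zp-torsion). Then for every open subgroup H_m ≤ H, rank_{Zp}(M/I_{H_m}M) = rank_{Zp}(N/I_{H_m}N), where I_{H_m} is the augmentation ideal of H_m. -/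
universe u

/-- Let `H ≅ Zp^{d-1}` and `Λ(H) ≅ Zp[[X₁,…,X_{d-1}]]`.  Given an exact
sequence `0 → A → M → N → 0` of finitely generated `Λ(H)`-modules with `A` being
`Zp`-torsion (every element killed by a power of `p`), for every `m` the `H_m`-coinvariants
of `M` and `N` have equal `Zp`-ranks, where `I_{H_m}` is the (augmentation) ideal
generated by the `(1+Xᵢ)^{p^m} − 1`. -/
theorem stmt16 (p : ℕ) [hp : Fact p.Prime] (d : ℕ) (hd : 2 ≤ d)
    (A M N : Type u)
    [AddCommGroup A] [AddCommGroup M] [AddCommGroup N]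
    [Module (MvPowerSeries (Fin (d - 1)) ℤ_[p]) A]
    [Module (MvPowerSeries (Fin (d - 1)) ℤ_[p]) M]
    [Module (MvPowerSeries (Fin (d - 1)) ℤ_[p]) N]
    [Module ℤ_[p] A] [Module ℤ_[p] M] [Module ℤ_[p] N]
    [IsScalarTower ℤ_[p] (MvPowerSeries (Fin (d - 1)) ℤ_[p]) A]
    [IsScalarTower ℤ_[p] (MvPowerSeries (Fin (d - 1)) ℤ_[p]) M]
    [IsScalarTower ℤ_[p] (MvPowerSeries (Fin (d - 1)) ℤ_[p]) N]
    [Module.Finite (MvPowerSeries (Fin (d - 1)) ℤ_[p]) A]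
    [Module.Finite (MvPowerSeries (Fin (d - 1)) ℤ_[p]) M]
    [Module.Finite (MvPowerSeries (Fin (d - 1)) ℤ_[p]) N]
    (f : A →ₗ[MvPowerSeries (Fin (d - 1)) ℤ_[p]] M)
    (g : M →ₗ[MvPowerSeries (Fin (d - 1)) ℤ_[p]] N)
    (hf : Function.Injective f) (hg : Function.Surjective g)
    (hfg : LinearMap.range f = LinearMap.ker g)
    (hAtors : ∀ a : A, ∃ k : ℕ, ((p : ℤ_[p]) ^ k) • a = 0) :
    ∀ m : ℕ,
      Module.rank ℤ_[p] (M ⧸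
        ((Ideal.span (Set.range fun i : Fin (d - 1) =>
            ((1 : MvPowerSeries (Fin (d - 1)) ℤ_[p]) + MvPowerSeries.X i) ^ p ^ m - 1)) • ⊤ :
          Submodule (MvPowerSeries (Fin (d - 1)) ℤ_[p]) M)) =
      Module.rank ℤ_[p] (N ⧸
        ((Ideal.span (Set.range fun i : Fin (d - 1) =>
            ((1 : MvPowerSeries (Fin (d - 1)) ℤ_[p]) + MvPowerSeries.X i) ^ p ^ m - 1)) • ⊤ :
          Submodule (MvPowerSeries (Fin (d - 1)) ℤ_[p]) N)) := by
  intro m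
  set Λ := MvPowerSeries (Fin (d - 1)) ℤ_[p] with hΛ
  set I : Ideal Λ := Ideal.span (Set.range fun i : Fin (d - 1) =>
      ((1 : Λ) + MvPowerSeries.X i) ^ p ^ m - 1) with hI
  set SM : Submodule Λ M := I • ⊤ with hSM
  set SN : Submodule Λ N := I • ⊤ with hSN
  have hmap : SM.map g = SN := by
    rw [hSM, hSN, Submodule.map_smul'', Submodule.map_top, LinearMap.range_eq_top.mpr hg]
  have hle : SM ≤ SN.comap g := by
    rw [← hmap]; exact Submodule.map_le_iff_le_comap.mp le_rfl
  set gbar : (M ⧸ SM) →ₗ[Λ] (N ⧸ SN) := Submodule.mapQ SM SN g hle with hgbar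
  have hgbar_surj : Function.Surjective gbar := by
    intro y
    obtain ⟨n, rfl⟩ := Submodule.mkQ_surjective SN y
    obtain ⟨x, rfl⟩ := hg n
    exact ⟨Submodule.Quotient.mk x, by rw [hgbar]; exact Submodule.mapQ_apply _ _ _ x⟩
  set gR : (M ⧸ SM) →ₗ[ℤ_[p]] (N ⧸ SN) := gbar.restrictScalars ℤ_[p] with hgR
  have hker : LinearMap.ker gR ≤ Submodule.torsion ℤ_[p] (M ⧸ SM) := by
    intro xbar hx
    obtain ⟨x, rfl⟩ := Submodule.mkQ_surjective SM xbar
    have hx' : g x ∈ SN := by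
      have h0 : gbar (Submodule.Quotient.mk x) = 0 := hx
      rw [hgbar, Submodule.mapQ_apply, Submodule.Quotient.mk_eq_zero] at h0
      exact h0
    rw [← hmap] at hx'
    obtain ⟨y, hy, hgy⟩ := hx'
    have hker_xy : x - y ∈ LinearMap.ker g := by
      simp [LinearMap.mem_ker, map_sub, hgy]
    rw [← hfg] at hker_xy
    obtain ⟨a, ha⟩ := hker_xy
    obtain ⟨k, hk⟩ := hAtors a
    have hpk : ((p : ℤ_[p]) ^ k) ≠ 0 := by
      exact pow_ne_zero _ (Nat.cast_ne_zero.mpr hp.out.ne_zero)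
    refine ⟨⟨(p : ℤ_[p]) ^ k, mem_nonZeroDivisors_of_ne_zero hpk⟩, ?_⟩
    have h1 : ((p : ℤ_[p]) ^ k) • (x - y) = 0 := by
      rw [← ha, ← smul_one_smul Λ ((p : ℤ_[p]) ^ k) (f a), ← map_smul f,
        smul_one_smul, hk, map_zero]
    have h2 : ((p : ℤ_[p]) ^ k) • x = ((p : ℤ_[p]) ^ k) • y := by
      have h1' : ((p : ℤ_[p]) ^ k) • x - ((p : ℤ_[p]) ^ k) • y = 0 := by
        rw [← smul_sub]; exact h1
      exact sub_eq_zero.mp h1'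
    have h3 : ((p : ℤ_[p]) ^ k) • y ∈ SM := by
      rw [← smul_one_smul Λ ((p : ℤ_[p]) ^ k) y]
      exact SM.smul_mem _ hy
    show ((p : ℤ_[p]) ^ k) • (SM.mkQ x) = 0
    rw [Submodule.mkQ_apply, ← Submodule.Quotient.mk_smul, h2,
      Submodule.Quotient.mk_eq_zero]
    exact h3
  have e : ((M ⧸ SM) ⧸ LinearMap.ker gR) ≃ₗ[ℤ_[p]] (N ⧸ SN) :=
    gR.quotKerEquivOfSurjective hgbar_surj
  rw [← rank_quotient_eq_of_le_torsion hker]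
  exact e.rank_eq
end
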